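/- arXiv:2004.06285 — 2 statements merged into one kernel-verified Lean document; each statement's English description precedes it below -/
import Mathlib

section
/- For every integer n ≥ 5, the graph K_n − e obtained from the complete graph K_n by deleting a single edge e satisfies rvd(K_n − e) = n. -/
open SimpleGraph

/-- The graph obtained from `G` by removing (isolating) the vertices of `S`.
Since in our uses the endpoints of interest never lie in `S`, reachability
between them in this graph agrees with reachability in `G - S`. -/
def SimpleGraph.delVerts {V : Type*} (G : SimpleGraph V) (S : Set V) : SimpleGraph V where
  Adj u v := G.Adj u v ∧ u ∉ S ∧ v ∉ S
  symm := ⟨fun u v h => ⟨h.1.symm, h.2.2, h.2.1⟩⟩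
  loopless := ⟨fun v h => G.loopless.irrefl v h.1⟩

/-- `c` is a rainbow vertex-disconnection coloring of `G`: every two distinct
vertices `x, y` admit an `x`-`y` rainbow vertex-cut. -/
def SimpleGraph.IsRVDColoring {V α : Type*} (G : SimpleGraph V) (c : V → α) : Prop :=
  ∀ x y : V, x ≠ y → ∃ S : Set V, x ∉ S ∧ y ∉ S ∧
    (¬ G.Adj x y → ¬ (G.delVerts S).Reachable x y ∧ Set.InjOn c S) ∧
    (G.Adj x y → ¬ ((G.deleteEdges {s(x, y)}).delVerts S).Reachable x y ∧
      (Set.InjOn c (S ∪ {x}) ∨ Set.InjOn c (S ∪ {y})))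

/-- The rainbow vertex-disconnection number of `G`: the minimum number of colors
in a rainbow vertex-disconnection coloring of `G`. -/
noncomputable def SimpleGraph.rvd {V : Type*} (G : SimpleGraph V) : ℕ :=
  sInf {k | ∃ c : V → Fin k, G.IsRVDColoring c}

/-!
An injective coloring is trivially a rainbow vertex-disconnection coloring (cut out everything
but `x` and `y`). Conversely, if `x y` is an edge, every common neighbour `w` of `x` and `y`
must lie in any `x`-`y` vertex-cut of `G - xy`, because of the path `x w y`; so a rainbow
vertex-disconnection coloring is injective on common neighbourhoods of edges. In `K_n - ab`
with `n ≥ 5` every two vertices lie in the common neighbourhood of some edge, so all `n`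
colors are needed.
-/

namespace SimpleGraph

variable {V α : Type*}

theorem not_reachable_delVerts_compl_pair {H : SimpleGraph V} {x y : V} (hxy : x ≠ y)
    (hnadj : ¬ H.Adj x y) : ¬ (H.delVerts {z | z ≠ x ∧ z ≠ y}).Reachable x y := by
  rintro ⟨_ | ⟨⟨hadj, -, hw⟩, -⟩⟩
  · exact hxy rfl
  · simp only [Set.mem_ofPred_eq, not_and_or, not_not] at hw
    rcases hw with rfl | rfl
    · exact H.loopless.irrefl _ hadj
    · exact hnadj hadj

namespace IsRVDColoring

variable {G : SimpleGraph V} {c : V → α}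

theorem of_injective (hc : Function.Injective c) : G.IsRVDColoring c := by
  intro x y hxy
  refine ⟨{z | z ≠ x ∧ z ≠ y}, by simp, by simp, fun hnadj => ?_, fun _ => ?_⟩
  · exact ⟨not_reachable_delVerts_compl_pair hxy hnadj, hc.injOn⟩
  · exact ⟨not_reachable_delVerts_compl_pair hxy (by simp), Or.inl hc.injOn⟩

theorem injOn_commonNeighbors (hc : G.IsRVDColoring c) {x y : V} (hxy : G.Adj x y) :
    Set.InjOn c (G.commonNeighbors x y) := by
  obtain ⟨S, hxS, hyS, -, hcut⟩ := hc x y hxy.ne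
  obtain ⟨hnr, hinj⟩ := hcut hxy
  have hsub : G.commonNeighbors x y ⊆ S := by
    intro w hw
    rw [mem_commonNeighbors] at hw
    by_contra hwS
    have hxw : ((G.deleteEdges {s(x, y)}).delVerts S).Adj x w :=
      ⟨deleteEdges_adj.mpr ⟨hw.1, fun h => hw.2.ne' (Sym2.congr_right.mp h)⟩, hxS, hwS⟩
    have hwy : ((G.deleteEdges {s(x, y)}).delVerts S).Adj w y :=
      ⟨deleteEdges_adj.mpr ⟨hw.2.symm, fun h => hw.1.ne' (Sym2.congr_left.mp h)⟩, hwS, hyS⟩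
    exact hnr (hxw.reachable.trans hwy.reachable)
  rcases hinj with h | h <;> exact h.mono (hsub.trans Set.subset_union_left)

theorem injective (hc : G.IsRVDColoring c)
    (hcover : ∀ u v : V, ∃ x y, G.Adj x y ∧ u ∈ G.commonNeighbors x y ∧
      v ∈ G.commonNeighbors x y) :
    Function.Injective c := by
  intro u v huv
  obtain ⟨x, y, hxy, hu, hv⟩ := hcover u v
  exact hc.injOn_commonNeighbors hxy hu hv huv

end IsRVDColoring

theorem rvd_eq_card [Fintype V] {G : SimpleGraph V}
    (hcover : ∀ u v : V, ∃ x y, G.Adj x y ∧ u ∈ G.commonNeighbors x y ∧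
      v ∈ G.commonNeighbors x y) :
    G.rvd = Fintype.card V := by
  have hcard : Fintype.card V ∈ {k | ∃ c : V → Fin k, G.IsRVDColoring c} :=
    ⟨Fintype.equivFin V, .of_injective (Fintype.equivFin V).injective⟩
  refine le_antisymm (Nat.sInf_le hcard) (le_csInf ⟨_, hcard⟩ ?_)
  rintro k ⟨c, hc⟩
  simpa using Fintype.card_le_of_injective c (hc.injective hcover)

section CompleteMinusEdge

variable {a b p q : V}

theorem top_deleteEdges_adj_of_ne_of_ne (hpq : p ≠ q) (hpa : p ≠ a) (hqa : q ≠ a) :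
    ((⊤ : SimpleGraph V).deleteEdges {s(a, b)}).Adj p q := by
  simp [hpq, hpa, hqa]

theorem top_deleteEdges_adj_of_left_ne (hpq : p ≠ q) (hpa : p ≠ a) (hpb : p ≠ b) :
    ((⊤ : SimpleGraph V).deleteEdges {s(a, b)}).Adj p q := by
  simp [hpq, hpa, hpb]

theorem exists_ne_notMem_triple [Fintype V] [DecidableEq V] (hV : 5 ≤ Fintype.card V)
    (p q r : V) : ∃ x y, x ≠ y ∧ x ∉ ({p, q, r} : Finset V) ∧ y ∉ ({p, q, r} : Finset V) := by
  have h : 1 < (Finset.univ \ {p, q, r}).card := by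
    have := Finset.le_card_sdiff {p, q, r} Finset.univ
    have := Finset.card_le_three (a := p) (b := q) (c := r)
    rw [Finset.card_univ] at *
    omega
  obtain ⟨x, hx, y, hy, hxy⟩ := Finset.one_lt_card.mp h
  exact ⟨x, y, hxy, (Finset.mem_sdiff.mp hx).2, (Finset.mem_sdiff.mp hy).2⟩

/-- If `a` is one of `u, v`, take the edge `x y` away from `a` and `b`; otherwise take it away
from `a`, so that `a` is none of `x, y, u, v`. -/
theorem top_deleteEdges_exists_adj_mem_commonNeighbors [Fintype V] [DecidableEq V]
    (hV : 5 ≤ Fintype.card V) (u v : V) :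
    ∃ x y, ((⊤ : SimpleGraph V).deleteEdges {s(a, b)}).Adj x y ∧
      u ∈ ((⊤ : SimpleGraph V).deleteEdges {s(a, b)}).commonNeighbors x y ∧
      v ∈ ((⊤ : SimpleGraph V).deleteEdges {s(a, b)}).commonNeighbors x y := by
  simp only [mem_commonNeighbors]
  by_cases ha : a = u ∨ a = v
  · obtain ⟨x, y, hxy, hx, hy⟩ := exists_ne_notMem_triple hV u v b
    simp only [Finset.mem_insert, Finset.mem_singleton, not_or] at hx hy
    have hxa : x ≠ a := by rintro rfl; tauto
    have hya : y ≠ a := by rintro rfl; tauto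
    refine ⟨x, y, top_deleteEdges_adj_of_left_ne hxy hxa hx.2.2, ?_, ?_⟩ <;>
      exact ⟨top_deleteEdges_adj_of_left_ne (by tauto) hxa hx.2.2,
        top_deleteEdges_adj_of_left_ne (by tauto) hya hy.2.2⟩
  · obtain ⟨x, y, hxy, hx, hy⟩ := exists_ne_notMem_triple hV u v a
    simp only [Finset.mem_insert, Finset.mem_singleton, not_or] at hx hy ha
    refine ⟨x, y, top_deleteEdges_adj_of_ne_of_ne hxy hx.2.2 hy.2.2, ?_, ?_⟩
    · exact ⟨top_deleteEdges_adj_of_ne_of_ne hx.1 hx.2.2 (Ne.symm ha.1),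
        top_deleteEdges_adj_of_ne_of_ne hy.1 hy.2.2 (Ne.symm ha.1)⟩
    · exact ⟨top_deleteEdges_adj_of_ne_of_ne hx.2.1 hx.2.2 (Ne.symm ha.2),
        top_deleteEdges_adj_of_ne_of_ne hy.2.1 hy.2.2 (Ne.symm ha.2)⟩

end CompleteMinusEdge

end SimpleGraph

theorem rvd_complete_sub_edge_general (n : ℕ) (hn : 5 ≤ n) (a b : Fin n) :
    ((⊤ : SimpleGraph (Fin n)).deleteEdges {s(a, b)}).rvd = n := by
  have hV : 5 ≤ Fintype.card (Fin n) := by simpa using hn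
  rw [rvd_eq_card (fun u v => top_deleteEdges_exists_adj_mem_commonNeighbors hV u v),
    Fintype.card_fin]

/-- For `n ≥ 5`, the graph `K_n - e` obtained from the complete graph on `n`
vertices by deleting a single edge `e` satisfies `rvd(K_n - e) = n`. -/
theorem rvd_complete_sub_edge (n : ℕ) (hn : 5 ≤ n) (a b : Fin n) (hab : a ≠ b) :
    ((⊤ : SimpleGraph (Fin n)).deleteEdges {s(a, b)}).rvd = n :=
  rvd_complete_sub_edge_general n hn a b
end

section
/- For every integer n ≥ 6 and any two distinct edges e_1, e_2 of the complete graph K_n, the graph K_n − 2e obtained from K_n by deleting e_1 and e_2 satisfies rvd(K_n − 2e) = n. -/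
open SimpleGraph

open Finset

/-!
Colouring the vertices injectively always works: cut `x` from `y` by all other vertices. Conversely,
every `x`-`y` vertex cut contains all common neighbours of `x` and `y`, so a rainbow
vertex-disconnection colouring is injective on each common neighbourhood. In `Kₙ` minus two edges,
any two vertices `u, v` have at least `n - 4 ≥ 2` common neighbours `x, y`; then `u, v` are common
neighbours of `x, y` and receive different colours.
-/

namespace SimpleGraph

variable {V α : Type*}

lemma delVerts_compl_pair_eq_bot {H : SimpleGraph V} {x y : V} (h : ¬ H.Adj x y) :
    H.delVerts ({x, y} : Set V)ᶜ = ⊥ := by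
  ext a b
  simp only [delVerts, Set.mem_compl_iff, Set.mem_insert_iff, Set.mem_singleton_iff, not_not,
    bot_adj, iff_false, not_and]
  rintro hab (rfl | rfl) (rfl | rfl) <;> first | exact hab.ne rfl | exact h hab | exact h hab.symm

lemma isRVDColoring_of_injective (G : SimpleGraph V) {c : V → α} (hc : Function.Injective c) :
    G.IsRVDColoring c := by
  intro x y hxy
  have hsep {H : SimpleGraph V} (h : ¬ H.Adj x y) :
      ¬ (H.delVerts ({x, y} : Set V)ᶜ).Reachable x y := by
    rw [delVerts_compl_pair_eq_bot h, reachable_bot]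
    exact hxy
  refine ⟨({x, y} : Set V)ᶜ, by simp, by simp, fun h => ⟨hsep h, hc.injOn⟩,
    fun _ => ⟨hsep ?_, Or.inl hc.injOn⟩⟩
  simp

lemma rvd_le_card [Fintype V] (G : SimpleGraph V) : G.rvd ≤ Fintype.card V :=
  Nat.sInf_le ⟨_, G.isRVDColoring_of_injective (Fintype.equivFin V).injective⟩

lemma commonNeighbors_subset_of_not_reachable_delVerts {H : SimpleGraph V} {S : Set V}
    {x y : V} (hx : x ∉ S) (hy : y ∉ S) (h : ¬ (H.delVerts S).Reachable x y) :
    H.commonNeighbors x y ⊆ S := by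
  intro w hw
  by_contra hwS
  rw [mem_commonNeighbors] at hw
  exact h ((show (H.delVerts S).Adj x w from ⟨hw.1, hx, hwS⟩).reachable.trans
    (show (H.delVerts S).Adj w y from ⟨hw.2.symm, hwS, hy⟩).reachable)

lemma commonNeighbors_subset_deleteEdges_self (G : SimpleGraph V) (x y : V) :
    G.commonNeighbors x y ⊆ (G.deleteEdges {s(x, y)}).commonNeighbors x y := by
  intro w hw
  rw [mem_commonNeighbors] at hw ⊢
  have hw_not_mem : w ∉ s(x, y) := by simp [hw.1.ne', hw.2.ne']
  simp only [deleteEdges_adj, Set.mem_singleton_iff]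
  exact ⟨⟨hw.1, fun h => hw_not_mem (h ▸ Sym2.mem_mk_right _ _)⟩,
    ⟨hw.2, fun h => hw_not_mem (h ▸ Sym2.mem_mk_right _ _)⟩⟩

lemma IsRVDColoring.injOn_commonNeighbors_s11 {G : SimpleGraph V} {c : V → α}
    (hc : G.IsRVDColoring c) {x y : V} (hxy : x ≠ y) : Set.InjOn c (G.commonNeighbors x y) := by
  obtain ⟨S, hxS, hyS, hnonadj, hadj⟩ := hc x y hxy
  by_cases h : G.Adj x y
  · obtain ⟨hsep, hinj⟩ := hadj h
    have hS := (G.commonNeighbors_subset_deleteEdges_self x y).trans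
      (commonNeighbors_subset_of_not_reachable_delVerts hxS hyS hsep)
    rcases hinj with hinj | hinj <;> exact hinj.mono (hS.trans Set.subset_union_left)
  · obtain ⟨hsep, hinj⟩ := hnonadj h
    exact hinj.mono (commonNeighbors_subset_of_not_reachable_delVerts hxS hyS hsep)

lemma card_le_rvd [Fintype V] {G : SimpleGraph V}
    (h : ∀ u v, u ≠ v → 1 < (G.commonNeighbors u v).ncard) : Fintype.card V ≤ G.rvd := by
  obtain ⟨c, hc⟩ : G.rvd ∈ {k | ∃ c : V → Fin k, G.IsRVDColoring c} :=
    Nat.sInf_mem ⟨_, _, G.isRVDColoring_of_injective (Fintype.equivFin V).injective⟩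
  refine (Fintype.card_le_of_injective c fun u v huv => ?_).trans_eq (Fintype.card_fin _)
  by_contra hne
  obtain ⟨x, hx, y, hy, hxy⟩ := (Set.one_lt_ncard).mp (h u v hne)
  rw [mem_commonNeighbors] at hx hy
  exact hne (hc.injOn_commonNeighbors_s11 hxy (by simp [mem_commonNeighbors, hx.1.symm, hy.1.symm])
    (by simp [mem_commonNeighbors, hx.2.symm, hy.2.symm]) huv)

/-- A vertex outside `{u, v}` that is not a common neighbour of `u` and `v` in `⊤.deleteEdges F`
is charged to a deleted edge through `u` or `v`; different vertices get different edges. -/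
lemma card_sub_le_ncard_commonNeighbors_top_deleteEdges [Fintype V]
    (F : Finset (Sym2 V)) (u v : V) :
    Fintype.card V - 2 - #F ≤ (((⊤ : SimpleGraph V).deleteEdges F).commonNeighbors u v).ncard := by
  classical
  rw [Set.ncard_eq_toFinset_card']
  set N := (((⊤ : SimpleGraph V).deleteEdges F).commonNeighbors u v).toFinset
  have hcharge : #(({u, v} : Finset V)ᶜ \ N) ≤ #F := by
    refine card_le_card_of_injOn (fun w => if s(u, w) ∈ F then s(u, w) else s(v, w)) ?_ ?_
    · intro w hw
      simp only [N, coe_sdiff, Set.mem_sdiff, mem_coe, mem_compl, mem_insert, mem_singleton,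
        Set.mem_toFinset, mem_commonNeighbors, deleteEdges_adj, top_adj] at hw
      dsimp only
      split_ifs <;> grind
    · intro w₁ hw₁ w₂ hw₂ h
      simp only [coe_sdiff, Set.mem_sdiff, mem_coe, mem_compl, mem_insert, mem_singleton] at hw₁ hw₂
      dsimp only at h
      split_ifs at h <;> grind [Sym2.eq_iff]
  have hpair : Fintype.card V - 2 ≤ #({u, v} : Finset V)ᶜ := by
    rw [card_compl]
    have := card_le_two (a := u) (b := v)
    omega
  have := card_le_card_sdiff_add_card (s := ({u, v} : Finset V)ᶜ) (t := N)
  omega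

end SimpleGraph

theorem rvd_complete_sub_two_edges_general (n : ℕ) (hn : 6 ≤ n) (e₁ e₂ : Sym2 (Fin n)) :
    ((⊤ : SimpleGraph (Fin n)).deleteEdges {e₁, e₂}).rvd = n := by
  have hF : (({e₁, e₂} : Finset (Sym2 (Fin n))) : Set (Sym2 (Fin n))) = {e₁, e₂} := by simp
  rw [← hF]
  refine le_antisymm ((rvd_le_card _).trans_eq (Fintype.card_fin n)) ?_
  refine (Fintype.card_fin n).symm.trans_le (card_le_rvd fun u v _ => ?_)
  have hcommon := card_sub_le_ncard_commonNeighbors_top_deleteEdges {e₁, e₂} u v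
  rw [Fintype.card_fin] at hcommon
  have hF_card := Finset.card_le_two (a := e₁) (b := e₂)
  omega

/-- For `n ≥ 6` and any two distinct edges `e₁, e₂` of the complete graph on
`n` vertices, the graph `K_n - 2e` obtained by deleting `e₁` and `e₂`
satisfies `rvd(K_n - 2e) = n`. -/
theorem rvd_complete_sub_two_edges (n : ℕ) (hn : 6 ≤ n) (e₁ e₂ : Sym2 (Fin n))
    (h₁ : e₁ ∈ (⊤ : SimpleGraph (Fin n)).edgeSet)
    (h₂ : e₂ ∈ (⊤ : SimpleGraph (Fin n)).edgeSet) (hne : e₁ ≠ e₂) :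
    ((⊤ : SimpleGraph (Fin n)).deleteEdges {e₁, e₂}).rvd = n :=
  rvd_complete_sub_two_edges_general n hn e₁ e₂
end
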